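/- arXiv:2603.13407 — 2 statements merged into one kernel-verified Lean document; each statement's English description precedes it below -/
import Mathlib

section
/- Let 𝒴 be a finite set, D₀, D₁ ⊆ 𝒴 nonempty, M_b := {x ∈ ℝ^𝒴 : supp(x) ⊆ D_b and Σ_{y∈D_b} x(y) = 0}, M := M₀ + M₁, and Π_J the orthogonal projection of ℝ^𝒴 onto M^⊥. For b ∈ {0,1} let p_b be a probability vector supported on D_b and μ_b := Σ_{y∈D_b} p_b(y) e_y. Let 𝒞 be the set of connected components of the hypergraph on vertex set D₀∪D₁ with hyperedges D₀ and D₁, and for C ∈ 𝒞 let m_C := Π_J e_y for any y ∈ C (well-defined), and set p̄_b(C) := Σ_{y∈D_b∩C} p_b(y). Then Δ := Π_J(μ₁ − μ₀) satisfies Δ = Σ_{C∈𝒞} (p̄₁(C) − p̄₀(C)) · m_C. -/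
/-! Two vertices of a common hyperedge `D_b` differ by `e_y - e_{y'} ∈ M_b ⊆ M`, which `Π_J`
annihilates; chaining along hyperedges, `Π_J e_y` is constant on each component. The formula is
then linearity of `Π_J` applied to `μ₁ - μ₀`, with the sums over `D_b` grouped by component. -/

open Finset

/-- The dominant tangent subspace `M_D = {x : supp(x) ⊆ D, Σ_{y∈D} x(y) = 0}`
inside the Euclidean space `ℝ^𝒴`. -/
noncomputable def tangent {Y : Type*} [Fintype Y] [DecidableEq Y] (D : Finset Y) :
    Submodule ℝ (EuclideanSpace ℝ Y) where
  carrier := {x | (∀ y ∉ D, x y = 0) ∧ ∑ y ∈ D, x y = 0}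
  add_mem' := by
    rintro a b ⟨ha1, ha2⟩ ⟨hb1, hb2⟩
    refine ⟨fun y hy => ?_, ?_⟩
    · show a y + b y = 0
      rw [ha1 y hy, hb1 y hy, add_zero]
    · show ∑ y ∈ D, (a y + b y) = 0
      rw [Finset.sum_add_distrib, ha2, hb2, add_zero]
  zero_mem' := ⟨fun y _ => rfl, by simp⟩
  smul_mem' := by
    rintro c a ⟨ha1, ha2⟩
    refine ⟨fun y hy => ?_, ?_⟩
    · show c * a y = 0
      rw [ha1 y hy, mul_zero]
    · show ∑ y ∈ D, c * a y = 0
      rw [← Finset.mul_sum, ha2, mul_zero]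

/-- The quotient projection `Π_J`: orthogonal projection of `ℝ^𝒴` onto `M^⊥`,
where `M = M_{D₀} + M_{D₁}` is the dominant tangent space. -/
noncomputable def PiJ {Y : Type*} [Fintype Y] [DecidableEq Y] (D₀ D₁ : Finset Y) :
    EuclideanSpace ℝ Y → EuclideanSpace ℝ Y :=
  fun x => (Submodule.orthogonalProjectionOnto (tangent D₀ + tangent D₁)ᗮ x : EuclideanSpace ℝ Y)


/-- One step in the hypergraph with vertex set `D₀ ∪ D₁` and hyperedges `D₀, D₁`:
two vertices are adjacent iff they lie in a common hyperedge. -/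
def hstep {Y : Type*} (D₀ D₁ : Finset Y) (y y' : Y) : Prop :=
  (y ∈ D₀ ∧ y' ∈ D₀) ∨ (y ∈ D₁ ∧ y' ∈ D₁)

open scoped Classical in
/-- The connected component of `y` in the hypergraph with hyperedges `D₀, D₁`. -/
noncomputable def hcomponent {Y : Type*} [DecidableEq Y] (D₀ D₁ : Finset Y) (y : Y) :
    Finset Y :=
  (D₀ ∪ D₁).filter (fun y' => Relation.ReflTransGen (hstep D₀ D₁) y y')

/-- The set of connected components of the hypergraph on `D₀ ∪ D₁` with
hyperedges `D₀` and `D₁`. -/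
noncomputable def hcomponents {Y : Type*} [DecidableEq Y] (D₀ D₁ : Finset Y) :
    Finset (Finset Y) :=
  (D₀ ∪ D₁).image (hcomponent D₀ D₁)

section

variable {Y : Type*} [DecidableEq Y] {D₀ D₁ : Finset Y}

instance : Std.Symm (hstep D₀ D₁) where
  symm _ _ := Or.imp And.symm And.symm

lemma mem_hcomponent {z y : Y} :
    y ∈ hcomponent D₀ D₁ z ↔ y ∈ D₀ ∪ D₁ ∧ Relation.ReflTransGen (hstep D₀ D₁) z y := by
  simp [hcomponent]

lemma reflTransGen_of_mem_hcomponent {z y y' : Y} (hy : y ∈ hcomponent D₀ D₁ z)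
    (hy' : y' ∈ hcomponent D₀ D₁ z) : Relation.ReflTransGen (hstep D₀ D₁) y y' :=
  (symm (mem_hcomponent.mp hy).2).trans (mem_hcomponent.mp hy').2

lemma hcomponent_eq_iff_mem {z y : Y} (hy : y ∈ D₀ ∪ D₁) :
    hcomponent D₀ D₁ y = hcomponent D₀ D₁ z ↔ y ∈ hcomponent D₀ D₁ z := by
  refine ⟨fun h => h ▸ mem_hcomponent.mpr ⟨hy, .refl⟩, fun h => ?_⟩
  ext w
  simp only [mem_hcomponent, and_congr_right_iff]
  intro _
  exact ⟨(mem_hcomponent.mp h).2.trans, (symm (mem_hcomponent.mp h).2).trans⟩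

lemma sum_smul_eq_sum_hcomponents {E : Type*} [AddCommGroup E] [Module ℝ E]
    {S : Finset Y} (hS : S ⊆ D₀ ∪ D₁) (c : Y → ℝ) (f : Y → E) (m : Finset Y → E)
    (hm : ∀ C ∈ hcomponents D₀ D₁, ∀ y ∈ C, m C = f y) :
    ∑ y ∈ S, c y • f y = ∑ C ∈ hcomponents D₀ D₁, (∑ y ∈ S ∩ C, c y) • m C := by
  rw [← sum_fiberwise_of_maps_to (g := hcomponent D₀ D₁)
    (fun y hy => mem_image_of_mem _ (hS hy))]
  refine sum_congr rfl fun C hC => ?_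
  obtain ⟨z, -, rfl⟩ := mem_image.mp hC
  have hfiber : S.filter (fun y => hcomponent D₀ D₁ y = hcomponent D₀ D₁ z) =
      S ∩ hcomponent D₀ D₁ z := by
    ext y
    simp only [mem_filter, mem_inter, and_congr_right_iff]
    exact fun hy => hcomponent_eq_iff_mem (hS hy)
  rw [hfiber, sum_smul]
  exact sum_congr rfl fun y hy => by rw [hm _ hC y (mem_inter.mp hy).2]

variable [Fintype Y]

lemma PiJ_eq_starProjection :
    PiJ D₀ D₁ = (tangent D₀ + tangent D₁)ᗮ.starProjection :=
  rfl

lemma PiJ_eq_of_sub_mem {x x' : EuclideanSpace ℝ Y} (h : x - x' ∈ tangent D₀ + tangent D₁) :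
    PiJ D₀ D₁ x = PiJ D₀ D₁ x' := by
  rw [← sub_eq_zero, PiJ_eq_starProjection, ← map_sub,
    Submodule.starProjection_apply_eq_zero_iff]
  exact Submodule.le_orthogonal_orthogonal _ h

lemma single_sub_single_mem_tangent {D : Finset Y} {y y' : Y} (hy : y ∈ D) (hy' : y' ∈ D) :
    EuclideanSpace.single y (1 : ℝ) - EuclideanSpace.single y' 1 ∈ tangent D := by
  refine ⟨fun z hz => ?_, ?_⟩
  · simp [ne_of_mem_of_not_mem hy hz, ne_of_mem_of_not_mem hy' hz]
  · simp [sum_sub_distrib, hy, hy']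

lemma single_sub_single_mem_tangent_sup {y y' : Y}
    (h : Relation.ReflTransGen (hstep D₀ D₁) y y') :
    EuclideanSpace.single y (1 : ℝ) - EuclideanSpace.single y' 1 ∈
      tangent D₀ + tangent D₁ := by
  induction h with
  | refl => simp
  | @tail z z' _ hzz' ih =>
    have hstep_mem : EuclideanSpace.single z (1 : ℝ) - EuclideanSpace.single z' 1 ∈
        tangent D₀ + tangent D₁ := by
      rcases hzz' with ⟨hz, hz'⟩ | ⟨hz, hz'⟩
      · exact Submodule.mem_sup_left (single_sub_single_mem_tangent hz hz')
      · exact Submodule.mem_sup_right (single_sub_single_mem_tangent hz hz')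
    simpa using add_mem ih hstep_mem

lemma PiJ_single_eq_of_mem_hcomponents {C : Finset Y} (hC : C ∈ hcomponents D₀ D₁)
    {y y' : Y} (hy : y ∈ C) (hy' : y' ∈ C) :
    PiJ D₀ D₁ (EuclideanSpace.single y 1) = PiJ D₀ D₁ (EuclideanSpace.single y' 1) := by
  obtain ⟨z, -, rfl⟩ := mem_image.mp hC
  exact PiJ_eq_of_sub_mem
    (single_sub_single_mem_tangent_sup (reflTransGen_of_mem_hcomponent hy hy'))

end

theorem quotient_shift_component_formula_general
    {Y : Type*} [Fintype Y] [DecidableEq Y]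
    (D : Fin 2 → Finset Y)
    (p : Fin 2 → Y → ℝ) :
    (∀ C ∈ hcomponents (D 0) (D 1), ∀ y ∈ C, ∀ y' ∈ C,
      PiJ (D 0) (D 1) (EuclideanSpace.single y 1) =
        PiJ (D 0) (D 1) (EuclideanSpace.single y' 1)) ∧
    (∀ m : Finset Y → EuclideanSpace ℝ Y,
      (∀ C ∈ hcomponents (D 0) (D 1), ∀ y ∈ C,
        m C = PiJ (D 0) (D 1) (EuclideanSpace.single y 1)) →
      PiJ (D 0) (D 1)
          ((∑ y ∈ D 1, p 1 y • EuclideanSpace.single y 1) -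
            ∑ y ∈ D 0, p 0 y • EuclideanSpace.single y 1) =
        ∑ C ∈ hcomponents (D 0) (D 1),
          ((∑ y ∈ D 1 ∩ C, p 1 y) - ∑ y ∈ D 0 ∩ C, p 0 y) • m C) := by
  refine ⟨fun C hC y hy y' hy' => PiJ_single_eq_of_mem_hcomponents hC hy hy', fun m hm => ?_⟩
  have regroup (b : Fin 2) (hb : D b ⊆ D 0 ∪ D 1) :=
    sum_smul_eq_sum_hcomponents hb (p b)
      (fun y => PiJ (D 0) (D 1) (EuclideanSpace.single y 1)) m hm
  simp only [PiJ_eq_starProjection, map_sub, map_sum, map_smul] at regroup ⊢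
  rw [regroup 1 subset_union_right, regroup 0 subset_union_left, ← sum_sub_distrib]
  simp only [sub_smul]

/-- The component formula for the quotient shift: `m_C := Π_J e_y` is well defined
for `y ∈ C` (any component `C`), and with `p̄_b(C) = Σ_{y ∈ D_b ∩ C} p_b(y)` one has
`Δ = Π_J(μ₁ − μ₀) = Σ_{C} (p̄₁(C) − p̄₀(C)) • m_C`. -/
theorem quotient_shift_component_formula
    {Y : Type*} [Fintype Y] [DecidableEq Y]
    (D : Fin 2 → Finset Y) (hD : ∀ b, (D b).Nonempty)
    (p : Fin 2 → Y → ℝ)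
    (hp_nonneg : ∀ b y, 0 ≤ p b y)
    (hp_supp : ∀ b, ∀ y ∉ D b, p b y = 0)
    (hp_sum : ∀ b, ∑ y ∈ D b, p b y = 1) :
    (∀ C ∈ hcomponents (D 0) (D 1), ∀ y ∈ C, ∀ y' ∈ C,
      PiJ (D 0) (D 1) (EuclideanSpace.single y 1) =
        PiJ (D 0) (D 1) (EuclideanSpace.single y' 1)) ∧
    (∀ m : Finset Y → EuclideanSpace ℝ Y,
      (∀ C ∈ hcomponents (D 0) (D 1), ∀ y ∈ C,
        m C = PiJ (D 0) (D 1) (EuclideanSpace.single y 1)) →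
      PiJ (D 0) (D 1)
          ((∑ y ∈ D 1, p 1 y • EuclideanSpace.single y 1) -
            ∑ y ∈ D 0, p 0 y • EuclideanSpace.single y 1) =
        ∑ C ∈ hcomponents (D 0) (D 1),
          ((∑ y ∈ D 1 ∩ C, p 1 y) - ∑ y ∈ D 0 ∩ C, p 0 y) • m C) :=
  quotient_shift_component_formula_general D p
end

section
/- Assume the general finite-dominant sparse-error critical regime. Fix b ∈ {0,1}, let Y_n ~ W_b^{(n)}, X_n := e_{Y_n} − μ_b, and for (u,v) ∈ M × M^⊥ define φ_{b,n}(u,v) := E exp(i⟨u, n^{−1/2}Π_G X_n⟩ + i⟨v, Π_J X_n⟩). Then, uniformly on compact subsets of M × M^⊥, φ_{b,n}(u,v) = 1 − (1/(2n))⟨u, Γ_b u⟩ + (1/n)·Σ_{y∉D_b} α_b(y)(e^{i⟨v, j_{b,y}⟩} − 1) + o(n^{−1}), and consequently log φ_{b,n}(u,v) = −(1/(2n))⟨u, Γ_b u⟩ + (1/n)·Σ_{y∉D_b} α_b(y)(e^{i⟨v, j_{b,y}⟩} − 1) + o(n^{−1}). -/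
open Finset

open Filter

/-- The general finite-dominant sparse-error critical regime
(Definition 2.2 of the paper): a finite alphabet `Y`, for each `b ∈ {0,1}` a nonempty
dominant set `D_b`, a dominant law `p_b ∈ Δ(D_b)` with full support on `D_b`,
rare intensities `α_b(y) ≥ 0` for `y ∉ D_b`, and local randomizers `W_b^{(n)}` with
`W_b^{(n)}(y) = p_b(y) + O(n⁻¹)` on `D_b` and `n·W_b^{(n)}(y) → α_b(y)` off `D_b`. -/
structure Regime (Y : Type*) [Fintype Y] [DecidableEq Y] where
  D : Fin 2 → Finset Y
  D_nonempty : ∀ b, (D b).Nonempty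
  p : Fin 2 → Y → ℝ
  p_pos : ∀ b, ∀ y ∈ D b, 0 < p b y
  p_supp : ∀ b, ∀ y ∉ D b, p b y = 0
  p_sum : ∀ b, ∑ y ∈ D b, p b y = 1
  α : Fin 2 → Y → ℝ
  α_nonneg : ∀ b y, 0 ≤ α b y
  W : Fin 2 → ℕ → Y → ℝ
  W_nonneg : ∀ b n y, 0 ≤ W b n y
  W_sum : ∀ b n, ∑ y, W b n y = 1
  W_dom : ∀ b, ∃ C : ℝ, ∀ y ∈ D b, ∀ n : ℕ, 1 ≤ n → |W b n y - p b y| ≤ C / n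
  W_rare : ∀ b, ∀ y ∉ D b,
    Tendsto (fun n : ℕ => (n : ℝ) * W b n y) atTop (nhds (α b y))

namespace Regime

variable {Y : Type*} [Fintype Y] [DecidableEq Y] (R : Regime Y)

/-- The dominant mean vector `μ_b = Σ_{y∈D_b} p_b(y) e_y`. -/
noncomputable def μvec (b : Fin 2) : EuclideanSpace ℝ Y :=
  ∑ y ∈ R.D b, R.p b y • EuclideanSpace.single y 1

/-- The dominant tangent space `M = M₀ + M₁`. -/
noncomputable def M : Submodule ℝ (EuclideanSpace ℝ Y) :=
  tangent (R.D 0) + tangent (R.D 1)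

/-- The Gaussian-block projection `Π_G`: orthogonal projection onto `M`. -/
noncomputable def PiG : EuclideanSpace ℝ Y → EuclideanSpace ℝ Y :=
  fun x => (Submodule.orthogonalProjectionOnto R.M x : EuclideanSpace ℝ Y)

/-- The quotient projection `Π_J := I − Π_G`. -/
noncomputable def PiJ' : EuclideanSpace ℝ Y → EuclideanSpace ℝ Y :=
  fun x => x - R.PiG x

/-- The jump vector `j_{b,y} = Π_J(e_y − μ_b)`. -/
noncomputable def jump (b : Fin 2) (y : Y) : EuclideanSpace ℝ Y :=
  R.PiJ' (EuclideanSpace.single y 1 - R.μvec b)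

/-- The dominant covariance quadratic form `⟨u, Γ_b u⟩ = Σ_{y∈D_b} p_b(y)⟨u, e_y−μ_b⟩²`. -/
noncomputable def gammaQuad (b : Fin 2) (u : EuclideanSpace ℝ Y) : ℝ :=
  ∑ y ∈ R.D b, R.p b y * (inner ℝ u (EuclideanSpace.single y 1 - R.μvec b) : ℝ) ^ 2

end Regime

namespace Regime

variable {Y : Type*} [Fintype Y] [DecidableEq Y]

/-- The one-user characteristic function
`φ_{b,n}(u,v) = E exp(i⟨u, n^{−1/2}Π_G X⟩ + i⟨v, Π_J X⟩)` for `X = e_Y − μ_b`,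
`Y ~ W_b^{(n)}`. -/
noncomputable def oneUserCF (R : Regime Y) (b : Fin 2) (n : ℕ)
    (u v : EuclideanSpace ℝ Y) : ℂ :=
  ∑ y, (R.W b n y : ℂ) * Complex.exp (Complex.I *
    (((inner ℝ u (((n : ℝ) ^ (-(1 : ℝ) / 2)) •
        R.PiG (EuclideanSpace.single y 1 - R.μvec b)) : ℝ) : ℂ) +
      ((inner ℝ v (R.PiJ' (EuclideanSpace.single y 1 - R.μvec b)) : ℝ) : ℂ)))

/-- The main term of the one-user expansion:
`1 − (1/(2n))⟨u,Γ_b u⟩ + (1/n)Σ_{y∉D_b} α_b(y)(e^{i⟨v,j_{b,y}⟩} − 1)`. -/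
noncomputable def oneUserMain (R : Regime Y) (b : Fin 2) (n : ℕ)
    (u v : EuclideanSpace ℝ Y) : ℂ :=
  1 - (1 / (2 * (n : ℂ))) * ((R.gammaQuad b u : ℝ) : ℂ) +
    (1 / (n : ℂ)) * ∑ y ∈ (R.D b)ᶜ, ((R.α b y : ℝ) : ℂ) *
      (Complex.exp (Complex.I * ((inner ℝ v (R.jump b y) : ℝ) : ℂ)) - 1)

end Regime

/-!
For `y ∈ D_b` the vector `e_y − μ_b` lies in `M`, so `Π_J` kills it and `Π_G` fixes it:
on the dominant letters the characteristic function is that of a centred bounded variable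
at scale `n^{-1/2}`. A second-order Taylor expansion of `e^{iθ}` leaves an error
`O(n^{-3/2})`, and replacing `W_b^{(n)}` by `p_b` in the first two moments costs `O(n^{-1})`
in the mean (which vanishes under `p_b`) and in the variance; after multiplying by `n`
everything is `o(1)`. On a rare letter `y ∉ D_b`, `n W_b^{(n)}(y) → α_b(y)` while
`e^{i n^{-1/2}⟨u, Π_G X⟩} → 1`, which produces the compound-Poisson term. All bounds are
uniform because `⟨u, ·⟩` is bounded for `u` in a bounded set. Finally
`φ_{b,n} − 1 = O(n^{-1})`, and `|log(1 + z) − z| ≤ |z|²` for small `z` gives the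
logarithmic form.
-/

section

open Topology Complex

theorem tendstoUniformlyOn_zero_iff_tendsto {ι α G : Type*} [SeminormedAddCommGroup G]
    {F : ι → α → G} {p : Filter ι} {s : Set α} :
    TendstoUniformlyOn F 0 p s ↔
      Tendsto (fun q : ι × α => F q.1 q.2) (p ×ˢ 𝓟 s) (𝓝 0) := by
  rw [tendstoUniformlyOn_iff_tendsto, uniformity_eq_comap_nhds_zero G, tendsto_comap_iff]
  simp [Function.comp_def]

theorem Complex.norm_exp_I_mul_ofReal_sub_taylor_le {θ : ℝ} (hθ : |θ| ≤ 1) :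
    ‖exp (I * θ) - (1 + I * θ + (I * θ) ^ 2 / 2)‖ ≤ |θ| ^ 3 := by
  have h := exp_bound (x := I * θ) (by simpa using hθ) (n := 3) (by norm_num)
  norm_num [Finset.sum_range_succ, Nat.factorial] at h
  exact h.trans (mul_le_of_le_one_right (by positivity) (by norm_num))

theorem tendsto_mul_log_one_add_sub_self {α : Type*} {l : Filter α} {c : α → ℝ}
    {z : α → ℂ} (hc : Tendsto c l atTop)
    (hz : IsBoundedUnder (· ≤ ·) l fun a => ‖(c a : ℂ) * z a‖) :
    Tendsto (fun a => (c a : ℂ) * (log (1 + z a) - z a)) l (𝓝 0) := by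
  obtain ⟨B, hB⟩ := hz
  refine squeeze_zero_norm' ?_ (tendsto_const_nhds (x := B ^ 2).div_atTop hc)
  filter_upwards [eventually_map.1 hB, hc.eventually_ge_atTop (2 * B), hc.eventually_gt_atTop 0]
    with a hcz hcB hc0
  have hz : ‖z a‖ ≤ B / c a := by
    rw [le_div_iff₀ hc0, mul_comm]
    simpa [abs_of_pos hc0] using hcz
  have hz_half : ‖z a‖ ≤ 1 / 2 := hz.trans (by rw [div_le_iff₀ hc0]; linarith)
  have hinv : (1 - ‖z a‖)⁻¹ ≤ 2 := by
    rw [inv_le_comm₀ (by linarith) two_pos]; linarith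
  calc ‖(c a : ℂ) * (log (1 + z a) - z a)‖ = c a * ‖log (1 + z a) - z a‖ := by
        simp [abs_of_pos hc0]
    _ ≤ c a * (‖z a‖ ^ 2 * (1 - ‖z a‖)⁻¹ / 2) := by
        gcongr; exact norm_log_one_add_sub_self_le (by linarith)
    _ ≤ c a * (B / c a) ^ 2 := by
        gcongr
        calc ‖z a‖ ^ 2 * (1 - ‖z a‖)⁻¹ / 2 ≤ ‖z a‖ ^ 2 * 2 / 2 := by gcongr
          _ ≤ (B / c a) ^ 2 := by rw [mul_div_cancel_right₀ _ two_ne_zero]; gcongr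
    _ = B ^ 2 / c a := by field_simp

theorem Bornology.IsBounded.exists_eventually_abs_inner_fst_le {ι E F : Type*}
    [NormedAddCommGroup E] [InnerProductSpace ℝ E] [SeminormedAddCommGroup F]
    {K : Set (E × F)} (hK : Bornology.IsBounded K) (p : Filter ι) (w : E) :
    ∃ B, ∀ᶠ q in p ×ˢ 𝓟 K, |inner ℝ q.2.1 w| ≤ B := by
  obtain ⟨C, hC⟩ := hK.exists_norm_le
  refine ⟨C * ‖w‖, ?_⟩
  filter_upwards [tendsto_snd.eventually_mem (mem_principal_self K)] with q hq
  exact (abs_real_inner_le_norm _ _).trans (by gcongr; exact (norm_fst_le _).trans (hC _ hq))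

namespace Regime

variable {Y : Type*} [Fintype Y] [DecidableEq Y] (R : Regime Y) (b : Fin 2)

local notation "E" => EuclideanSpace ℝ Y

noncomputable def invSqrt (n : ℕ) : ℝ := (n : ℝ) ^ (-(1 : ℝ) / 2)

lemma invSqrt_nonneg (n : ℕ) : 0 ≤ invSqrt n := Real.rpow_nonneg n.cast_nonneg _

lemma invSqrt_sq_mul {n : ℕ} (hn : n ≠ 0) : invSqrt n ^ 2 * n = 1 := by
  have hn' : (0 : ℝ) < n := by positivity
  rw [invSqrt, ← Real.rpow_natCast, ← Real.rpow_mul hn'.le]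
  norm_num [Real.rpow_neg_one, hn'.ne']

lemma tendsto_invSqrt : Tendsto invSqrt atTop (𝓝 0) := by
  unfold invSqrt
  simpa [Function.comp_def, neg_div] using
    (tendsto_rpow_neg_atTop (by norm_num : (0 : ℝ) < 1 / 2)).comp tendsto_natCast_atTop_atTop

noncomputable def centered (y : Y) : E := EuclideanSpace.single y 1 - R.μvec b

lemma μvec_apply (z : Y) : R.μvec b z = if z ∈ R.D b then R.p b z else 0 := by
  simp [μvec, Finset.sum_apply, Pi.single_apply, mul_ite]

lemma centered_mem_tangent {y : Y} (hy : y ∈ R.D b) : R.centered b y ∈ tangent (R.D b) := by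
  refine ⟨fun z hz => ?_, ?_⟩
  · simp [centered, μvec_apply, hz, ne_of_mem_of_not_mem hy hz |>.symm]
  · simp [centered, μvec_apply, Finset.sum_sub_distrib, hy, R.p_sum]

lemma centered_mem_M {y : Y} (hy : y ∈ R.D b) : R.centered b y ∈ R.M := by
  fin_cases b
  · exact Submodule.mem_sup_left (R.centered_mem_tangent 0 hy)
  · exact Submodule.mem_sup_right (R.centered_mem_tangent 1 hy)

lemma PiG_of_mem {w : E} (hw : w ∈ R.M) : R.PiG w = w :=
  Submodule.starProjection_eq_self_iff.mpr hw

lemma PiJ'_of_mem {w : E} (hw : w ∈ R.M) : R.PiJ' w = 0 := by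
  rw [PiJ', R.PiG_of_mem hw, sub_self]

lemma sum_p_mul_inner_centered (u : E) :
    ∑ y ∈ R.D b, R.p b y * inner ℝ u (R.centered b y) = 0 := by
  simp_rw [← real_inner_smul_right, ← inner_sum, centered, smul_sub, Finset.sum_sub_distrib,
    ← Finset.sum_smul, R.p_sum, one_smul]
  rw [← μvec, sub_self, inner_zero_right]

lemma W_le_one (n : ℕ) (y : Y) : R.W b n y ≤ 1 :=
  R.W_sum b n ▸ Finset.single_le_sum (fun z _ => R.W_nonneg b n z) (Finset.mem_univ y)

noncomputable def levyExponent (u v : E) : ℂ :=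
  -(1 / 2) * (R.gammaQuad b u : ℂ) +
    ∑ y ∈ (R.D b)ᶜ, (R.α b y : ℂ) * (exp (I * inner ℝ v (R.jump b y)) - 1)

lemma oneUserMain_eq {n : ℕ} (hn : n ≠ 0) (u v : E) :
    R.oneUserMain b n u v = 1 + R.levyExponent b u v / n := by
  simp only [oneUserMain, levyExponent]
  field_simp
  ring

lemma oneUserCF_eq (n : ℕ) (u v : E) :
    R.oneUserCF b n u v = ∑ y, (R.W b n y : ℂ) *
      exp (I * ((invSqrt n * inner ℝ u (R.PiG (R.centered b y)) : ℝ) +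
        inner ℝ v (R.jump b y))) := by
  simp only [oneUserCF, real_inner_smul_right]
  rfl

/- Contributions of a dominant and of a rare letter `y` to `n (φ_{b,n} − 1) − levyExponent`,
with `w = W_b^{(n)}(y)`, `t = ⟨u, e_y − μ_b⟩`, `s = ⟨u, Π_G (e_y − μ_b)⟩` and
`r = ⟨v, j_{b,y}⟩`. -/
noncomputable def dominantTerm (n : ℕ) (w p t : ℝ) : ℂ :=
  (n * w : ℝ) * (exp (I * (invSqrt n * t : ℝ)) - 1) + (p * t ^ 2 / 2 : ℝ)

noncomputable def rareTerm (n : ℕ) (w a s r : ℝ) : ℂ :=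
  (n * w : ℝ) * (exp (I * ((invSqrt n * s : ℝ) + r)) - 1) - a * (exp (I * r) - 1)

lemma natCast_mul_oneUserCF_sub_one_sub_levyExponent (n : ℕ) (u v : E) :
    n * (R.oneUserCF b n u v - 1) - R.levyExponent b u v =
      ∑ y ∈ R.D b, dominantTerm n (R.W b n y) (R.p b y) (inner ℝ u (R.centered b y)) +
      ∑ y ∈ (R.D b)ᶜ, rareTerm n (R.W b n y) (R.α b y) (inner ℝ u (R.PiG (R.centered b y)))
        (inner ℝ v (R.jump b y)) := by
  have hW : ∑ y, (R.W b n y : ℂ) = 1 := by exact_mod_cast R.W_sum b n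
  have hdom : ∀ y ∈ R.D b,
      inner ℝ u (R.PiG (R.centered b y)) = inner ℝ u (R.centered b y) ∧
        inner ℝ v (R.jump b y) = 0 := fun y hy =>
    ⟨by rw [R.PiG_of_mem (R.centered_mem_M b hy)],
     by rw [jump, ← centered, R.PiJ'_of_mem (R.centered_mem_M b hy), inner_zero_right]⟩
  rw [oneUserCF_eq, ← hW, ← sum_sub_distrib, mul_sum, ← sum_add_sum_compl (R.D b),
    levyExponent, gammaQuad, ofReal_sum, mul_sum, add_sub_add_comm, ← sum_sub_distrib,
    ← sum_sub_distrib]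
  congr 1 <;> refine sum_congr rfl fun y hy => ?_
  · rw [(hdom y hy).1, (hdom y hy).2, dominantTerm, centered]
    push_cast
    ring_nf
  · rw [rareTerm]
    push_cast
    ring

/- The Taylor remainder of `e^{iθ}` at `θ = n^{-1/2} t` after order two, and the errors of `w`
against `p` in the first and second moments. -/
noncomputable def dominantRemainder (n : ℕ) (w p t : ℝ) : ℂ :=
  (n * w : ℝ) * (exp (I * (invSqrt n * t : ℝ)) -
      (1 + I * (invSqrt n * t : ℝ) + (I * (invSqrt n * t : ℝ)) ^ 2 / 2)) +
    I * (invSqrt n * (n * (w - p)) * t : ℝ) - ((w - p) * t ^ 2 / 2 : ℝ)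

lemma dominantTerm_eq {n : ℕ} (hn : n ≠ 0) (w p t : ℝ) :
    dominantTerm n w p t = dominantRemainder n w p t + I * (invSqrt n * n) * (p * t) := by
  have hsq : ((invSqrt n : ℂ)) ^ 2 * n = 1 := by exact_mod_cast invSqrt_sq_mul hn
  rw [dominantTerm, dominantRemainder]
  push_cast
  linear_combination (n * w * invSqrt n ^ 2 * t ^ 2 / 2 : ℂ) * I_sq - (w * t ^ 2 / 2 : ℂ) * hsq

lemma sum_dominantTerm_eq {n : ℕ} (hn : n ≠ 0) (u : E) :
    ∑ y ∈ R.D b, dominantTerm n (R.W b n y) (R.p b y) (inner ℝ u (R.centered b y)) =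
      ∑ y ∈ R.D b,
        dominantRemainder n (R.W b n y) (R.p b y) (inner ℝ u (R.centered b y)) := by
  have hmean : ∑ y ∈ R.D b, (R.p b y : ℂ) * inner ℝ u (R.centered b y) = 0 := by
    exact_mod_cast R.sum_p_mul_inner_centered b u
  simp only [dominantTerm_eq hn, sum_add_distrib, ← mul_sum, hmean, mul_zero, add_zero]

lemma norm_dominantRemainder_le {n : ℕ} (hn : n ≠ 0) {w p t B C : ℝ} (hw₀ : 0 ≤ w)
    (hw₁ : w ≤ 1) (hwp : |w - p| ≤ C / n) (ht : |t| ≤ B) (hsmall : invSqrt n * B ≤ 1) :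
    ‖dominantRemainder n w p t‖ ≤ invSqrt n * (B ^ 3 + C * B) + C * B ^ 2 / 2 / n := by
  have hn' : (0 : ℝ) < n := by positivity
  have hsq := invSqrt_sq_mul hn
  have hinv₀ := invSqrt_nonneg n
  have hB₀ : 0 ≤ B := (abs_nonneg t).trans ht
  have hθ : |invSqrt n * t| ≤ invSqrt n * B := by rw [abs_mul, abs_of_nonneg hinv₀]; gcongr
  have h₁ : ‖((n * w : ℝ) : ℂ) * (exp (I * (invSqrt n * t : ℝ)) -
      (1 + I * (invSqrt n * t : ℝ) + (I * (invSqrt n * t : ℝ)) ^ 2 / 2))‖ ≤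
        invSqrt n * B ^ 3 := by
    rw [norm_mul, norm_real, Real.norm_of_nonneg (by positivity)]
    calc n * w * ‖_‖ ≤ n * w * (invSqrt n * B) ^ 3 := by
          gcongr
          exact (norm_exp_I_mul_ofReal_sub_taylor_le (hθ.trans hsmall)).trans (by gcongr)
      _ = w * (invSqrt n ^ 2 * n) * (invSqrt n * B ^ 3) := by ring
      _ = w * (invSqrt n * B ^ 3) := by rw [hsq, mul_one]
      _ ≤ invSqrt n * B ^ 3 :=
          mul_le_of_le_one_left (mul_nonneg hinv₀ (pow_nonneg hB₀ 3)) hw₁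
  have hnwp : n * |w - p| ≤ C := (le_div_iff₀' hn').1 hwp
  have hC₀ : 0 ≤ C := (mul_nonneg hn'.le (abs_nonneg _)).trans hnwp
  have h₂ : ‖I * ((invSqrt n * (n * (w - p)) * t : ℝ) : ℂ)‖ ≤ invSqrt n * (C * B) := by
    rw [norm_mul, norm_I, one_mul, norm_real, Real.norm_eq_abs, abs_mul, abs_mul, abs_mul,
      abs_of_nonneg hinv₀, Nat.abs_cast, mul_assoc]
    gcongr
  have h₃ : ‖(((w - p) * t ^ 2 / 2 : ℝ) : ℂ)‖ ≤ C * B ^ 2 / 2 / n := by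
    rw [norm_real, Real.norm_eq_abs, abs_div, abs_mul, abs_pow, abs_two]
    calc |w - p| * |t| ^ 2 / 2 ≤ C / n * B ^ 2 / 2 := by gcongr
      _ = C * B ^ 2 / 2 / n := by ring
  calc ‖dominantRemainder n w p t‖
        ≤ invSqrt n * B ^ 3 + invSqrt n * (C * B) + C * B ^ 2 / 2 / n :=
        (norm_sub_le _ _).trans (add_le_add ((norm_add_le _ _).trans (add_le_add h₁ h₂)) h₃)
    _ = invSqrt n * (B ^ 3 + C * B) + C * B ^ 2 / 2 / n := by ring

lemma norm_rareTerm_le (n : ℕ) {w a s r B : ℝ} (hw : 0 ≤ w) (hs : |s| ≤ B) :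
    ‖rareTerm n w a s r‖ ≤ n * w * (invSqrt n * B) + 2 * |n * w - a| := by
  have hinv₀ := invSqrt_nonneg n
  have hsplit : rareTerm n w a s r =
      ((n * w : ℝ) : ℂ) * exp (I * r) * (exp (I * (invSqrt n * s : ℝ)) - 1) +
        ((n * w - a : ℝ) : ℂ) * (exp (I * r) - 1) := by
    rw [rareTerm, mul_add I, exp_add]
    push_cast
    ring
  have hexp : ‖exp (I * r) - 1‖ ≤ 2 :=
    (norm_sub_le _ _).trans (by rw [norm_exp_I_mul_ofReal, norm_one]; norm_num)
  rw [hsplit]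
  refine (norm_add_le _ _).trans (add_le_add ?_ ?_)
  · rw [norm_mul, norm_mul, norm_exp_I_mul_ofReal, norm_real, Real.norm_of_nonneg (by positivity),
      mul_one]
    gcongr
    refine Real.norm_exp_I_mul_ofReal_sub_one_le.trans ?_
    rw [Real.norm_eq_abs, abs_mul, abs_of_nonneg hinv₀]
    gcongr
  · rw [norm_mul, norm_real, Real.norm_eq_abs, mul_comm]
    gcongr

lemma tendsto_dominantRemainder {K : Set (E × E)} (hK : Bornology.IsBounded K) {y : Y}
    (hy : y ∈ R.D b) :
    Tendsto (fun q : ℕ × (E × E) => dominantRemainder q.1 (R.W b q.1 y) (R.p b y)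
      (inner ℝ q.2.1 (R.centered b y))) ((atTop : Filter ℕ) ×ˢ 𝓟 K) (𝓝 0) := by
  obtain ⟨B, hB⟩ := hK.exists_eventually_abs_inner_fst_le (atTop : Filter ℕ) (R.centered b y)
  obtain ⟨C, hC⟩ := R.W_dom b
  have hbound : Tendsto (fun n : ℕ => invSqrt n * (B ^ 3 + C * B) + C * B ^ 2 / 2 / n)
      atTop (𝓝 0) := by
    simpa using (tendsto_invSqrt.mul_const _).add
      (tendsto_const_div_atTop_nhds_zero_nat (C * B ^ 2 / 2))
  have hsmall : ∀ᶠ n : ℕ in atTop, invSqrt n * B ≤ 1 :=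
    (tendsto_invSqrt.mul_const B).eventually (ge_mem_nhds (by simp))
  refine squeeze_zero_norm' ?_ (hbound.comp tendsto_fst)
  filter_upwards [hB, tendsto_fst.eventually (hsmall.and (eventually_ge_atTop 1))] with q ht hn
  exact norm_dominantRemainder_le (by omega) (R.W_nonneg b q.1 y) (R.W_le_one b q.1 y)
    (hC y hy q.1 hn.2) ht hn.1

lemma tendsto_rareTerm {K : Set (E × E)} (hK : Bornology.IsBounded K) {y : Y} (hy : y ∉ R.D b) :
    Tendsto (fun q : ℕ × (E × E) => rareTerm q.1 (R.W b q.1 y) (R.α b y)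
      (inner ℝ q.2.1 (R.PiG (R.centered b y))) (inner ℝ q.2.2 (R.jump b y)))
      ((atTop : Filter ℕ) ×ˢ 𝓟 K) (𝓝 0) := by
  obtain ⟨B, hB⟩ :=
    hK.exists_eventually_abs_inner_fst_le (atTop : Filter ℕ) (R.PiG (R.centered b y))
  have hW := R.W_rare b y hy
  have hbound : Tendsto
      (fun n : ℕ => n * R.W b n y * (invSqrt n * B) + 2 * |n * R.W b n y - R.α b y|)
      atTop (𝓝 0) := by
    simpa using (hW.mul (tendsto_invSqrt.mul_const B)).add
      ((hW.sub_const (R.α b y)).abs.const_mul 2)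
  refine squeeze_zero_norm' ?_ (hbound.comp tendsto_fst)
  filter_upwards [hB] with q hs
  exact norm_rareTerm_le _ (R.W_nonneg b q.1 y) hs

theorem tendsto_natCast_mul_oneUserCF_sub_one_sub_levyExponent {K : Set (E × E)}
    (hK : Bornology.IsBounded K) :
    Tendsto (fun q : ℕ × (E × E) =>
      (q.1 : ℂ) * (R.oneUserCF b q.1 q.2.1 q.2.2 - 1) - R.levyExponent b q.2.1 q.2.2)
      ((atTop : Filter ℕ) ×ˢ 𝓟 K) (𝓝 0) := by
  have hdom := tendsto_finsetSum _ fun y hy => R.tendsto_dominantRemainder b hK hy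
  have hrare := tendsto_finsetSum _ fun y hy => R.tendsto_rareTerm b hK (mem_compl.1 hy)
  have hsum := hdom.add hrare
  simp only [sum_const_zero, add_zero] at hsum
  refine hsum.congr' ?_
  filter_upwards [tendsto_fst.eventually (eventually_ne_atTop 0)] with q hq
  rw [natCast_mul_oneUserCF_sub_one_sub_levyExponent, sum_dominantTerm_eq _ _ hq]

lemma continuous_levyExponent : Continuous fun uv : E × E => R.levyExponent b uv.1 uv.2 := by
  unfold levyExponent gammaQuad
  fun_prop

theorem tendsto_natCast_mul_log_oneUserCF_sub_levyExponent {K : Set (E × E)} (hK : IsCompact K) :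
    Tendsto (fun q : ℕ × (E × E) =>
      (q.1 : ℂ) * log (R.oneUserCF b q.1 q.2.1 q.2.2) - R.levyExponent b q.2.1 q.2.2)
      ((atTop : Filter ℕ) ×ˢ 𝓟 K) (𝓝 0) := by
  have hexp := R.tendsto_natCast_mul_oneUserCF_sub_one_sub_levyExponent b hK.isBounded
  obtain ⟨C, hC⟩ := hK.exists_bound_of_continuousOn (R.continuous_levyExponent b).continuousOn
  have hbdd : IsBoundedUnder (· ≤ ·) ((atTop : Filter ℕ) ×ˢ 𝓟 K)
      fun q => ‖((q.1 : ℝ) : ℂ) * (R.oneUserCF b q.1 q.2.1 q.2.2 - 1)‖ := by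
    refine isBoundedUnder_of_eventually_le (a := 1 + C) ?_
    filter_upwards [hexp.norm.eventually (gt_mem_nhds (by simp : ‖(0 : ℂ)‖ < 1)),
      tendsto_snd.eventually_mem (mem_principal_self K)] with q hq hqK
    calc ‖((q.1 : ℝ) : ℂ) * (R.oneUserCF b q.1 q.2.1 q.2.2 - 1)‖
        = ‖((q.1 : ℂ) * (R.oneUserCF b q.1 q.2.1 q.2.2 - 1) - R.levyExponent b q.2.1 q.2.2) +
            R.levyExponent b q.2.1 q.2.2‖ := by rw [sub_add_cancel, ofReal_natCast]
      _ ≤ 1 + C := (norm_add_le _ _).trans (add_le_add hq.le (hC q.2 hqK))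
  have hlog := (tendsto_mul_log_one_add_sub_self
    (tendsto_natCast_atTop_atTop.comp tendsto_fst) hbdd).add hexp
  rw [add_zero] at hlog
  refine hlog.congr fun q => ?_
  simp only [Function.comp_apply, ofReal_natCast, add_sub_cancel]
  ring

end Regime

end

open Regime in
theorem one_user_char_expansion_general
    {Y : Type*} [Fintype Y] [DecidableEq Y] (R : Regime Y) (b : Fin 2)
    (K : Set (EuclideanSpace ℝ Y × EuclideanSpace ℝ Y)) (hK : IsCompact K) :
    TendstoUniformlyOn
      (fun (n : ℕ) (uv : EuclideanSpace ℝ Y × EuclideanSpace ℝ Y) =>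
        (n : ℂ) * (R.oneUserCF b n uv.1 uv.2 - R.oneUserMain b n uv.1 uv.2))
      0 atTop K ∧
    TendstoUniformlyOn
      (fun (n : ℕ) (uv : EuclideanSpace ℝ Y × EuclideanSpace ℝ Y) =>
        (n : ℂ) * (Complex.log (R.oneUserCF b n uv.1 uv.2) -
          (R.oneUserMain b n uv.1 uv.2 - 1)))
      0 atTop K := by
  have hn : ∀ᶠ q in (atTop : Filter ℕ) ×ˢ 𝓟 K, q.1 ≠ 0 :=
    tendsto_fst.eventually (eventually_ne_atTop 0)
  refine ⟨tendstoUniformlyOn_zero_iff_tendsto.2 <|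
      (R.tendsto_natCast_mul_oneUserCF_sub_one_sub_levyExponent b hK.isBounded).congr' ?_,
    tendstoUniformlyOn_zero_iff_tendsto.2 <|
      (R.tendsto_natCast_mul_log_oneUserCF_sub_levyExponent b hK).congr' ?_⟩ <;>
  · filter_upwards [hn] with q hq
    have hq' : (q.1 : ℂ) ≠ 0 := Nat.cast_ne_zero.2 hq
    rw [R.oneUserMain_eq b hq]
    field_simp
    ring

open Regime in
/-- One-user characteristic expansion (Lemma A.2): uniformly on compact subsets of
`M × M^⊥`, `φ_{b,n}(u,v) = 1 − (1/(2n))⟨u,Γ_b u⟩ + (1/n)Σ_{y∉D_b} α_b(y)(e^{i⟨v,j_{b,y}⟩}−1)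
+ o(n⁻¹)`, and consequently the same expansion holds for `log φ_{b,n}(u,v)` without
the leading `1`. -/
theorem one_user_char_expansion
    {Y : Type*} [Fintype Y] [DecidableEq Y] (R : Regime Y) (b : Fin 2)
    (K : Set (EuclideanSpace ℝ Y × EuclideanSpace ℝ Y)) (hK : IsCompact K)
    (hKM : ∀ uv ∈ K, uv.1 ∈ R.M ∧ uv.2 ∈ R.Mᗮ) :
    TendstoUniformlyOn
      (fun (n : ℕ) (uv : EuclideanSpace ℝ Y × EuclideanSpace ℝ Y) =>
        (n : ℂ) * (R.oneUserCF b n uv.1 uv.2 - R.oneUserMain b n uv.1 uv.2))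
      0 atTop K ∧
    TendstoUniformlyOn
      (fun (n : ℕ) (uv : EuclideanSpace ℝ Y × EuclideanSpace ℝ Y) =>
        (n : ℂ) * (Complex.log (R.oneUserCF b n uv.1 uv.2) -
          (R.oneUserMain b n uv.1 uv.2 - 1)))
      0 atTop K :=
  one_user_char_expansion_general R b K hK
end
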